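/- Let n, m be natural numbers with m even, and consider the real block matrix M of size (2n+m) with blocks M = [[B, I_n, -C],[-I_n, 0, 0],[Cᵀ, 0, Ω]] where B is an n×n skew-symmetric matrix, C is an n×m matrix, and Ω is an m×m invertible skew-symmetric matrix. Then M is invertible. -/

import Mathlib

/-!
The coordinate matrix of the Sternberg form acts on `(x, y, z)` as
`(B x + y - C z, -x, Cᵀ x + Ω z)`. If two vectors have the same image, the middle block forces
equal `x`, invertibility of `Ω` then forces equal `z`, and the first block finally equal `y`.
-/

namespace Matrix

variable {K ι κ : Type*} [Field K] [Fintype ι] [DecidableEq ι] [Fintype κ]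

def sternberg (B : Matrix ι ι K) (C : Matrix ι κ K) (Ω : Matrix κ κ K) :
    Matrix (ι ⊕ ι ⊕ κ) (ι ⊕ ι ⊕ κ) K :=
  fromBlocks B (fromCols 1 (-C)) (fromRows (-1) Cᵀ) (fromBlocks 0 0 0 Ω)

theorem sternberg_mulVec (B : Matrix ι ι K) (C : Matrix ι κ K) (Ω : Matrix κ κ K)
    (x y : ι → K) (z : κ → K) :
    sternberg B C Ω *ᵥ Sum.elim x (Sum.elim y z) =
      Sum.elim (B *ᵥ x + y - C *ᵥ z) (Sum.elim (-x) (Cᵀ *ᵥ x + Ω *ᵥ z)) := by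
  simp [sternberg, fromBlocks_mulVec, ← Sum.elim_add_add, neg_mulVec, sub_eq_add_neg, add_assoc]

theorem isUnit_sternberg [DecidableEq κ] (B : Matrix ι ι K) (C : Matrix ι κ K)
    {Ω : Matrix κ κ K} (hΩ : IsUnit Ω) : IsUnit (sternberg B C Ω) := by
  have split (v : ι ⊕ ι ⊕ κ → K) : ∃ x y z, v = Sum.elim x (Sum.elim y z) :=
    ⟨v ∘ Sum.inl, v ∘ Sum.inr ∘ Sum.inl, v ∘ Sum.inr ∘ Sum.inr, by ext (i | i | i) <;> rfl⟩
  refine mulVec_injective_iff_isUnit.mp fun v w hvw => ?_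
  obtain ⟨x, y, z, rfl⟩ := split v
  obtain ⟨x', y', z', rfl⟩ := split w
  simp only [sternberg_mulVec, Sum.elim_eq_iff, neg_inj] at hvw
  obtain ⟨hfirst, rfl, hlast⟩ := hvw
  obtain rfl := mulVec_injective_of_isUnit hΩ (add_left_cancel hlast)
  rw [add_sub_assoc, add_sub_assoc, add_right_inj, sub_left_inj] at hfirst
  rw [hfirst]

end Matrix

theorem stmt3 (n m : ℕ)
    (B : Matrix (Fin n) (Fin n) ℝ) (C : Matrix (Fin n) (Fin m) ℝ)
    (Ω : Matrix (Fin m) (Fin m) ℝ)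
    (hΩ : IsUnit Ω) :
    IsUnit (Matrix.of (fun i j : Fin n ⊕ Fin n ⊕ Fin m =>
      match i, j with
      | Sum.inl i, Sum.inl j => B i j
      | Sum.inl i, Sum.inr (Sum.inl j) => if i = j then (1 : ℝ) else 0
      | Sum.inl i, Sum.inr (Sum.inr j) => -(C i j)
      | Sum.inr (Sum.inl i), Sum.inl j => -(if i = j then (1 : ℝ) else 0)
      | Sum.inr (Sum.inl _), Sum.inr _ => 0
      | Sum.inr (Sum.inr i), Sum.inl j => C j i
      | Sum.inr (Sum.inr _), Sum.inr (Sum.inl _) => 0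
      | Sum.inr (Sum.inr i), Sum.inr (Sum.inr j) => Ω i j)) := by
  convert Matrix.isUnit_sternberg B C hΩ using 1
  ext (i | i | i) (j | j | j) <;> rfl
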